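/- Let η, η̂ ∈ (0,1] and M, M̂ > 0. Define, for z, ẑ ∈ [−1,1), U₂(z,ẑ) := −(1/8)[ηM(1+z)²√(1−z) + η̂M̂(1+ẑ)²√(1−ẑ)] + (1/2)(1+ẑ)E(z,ẑ)√(1−ẑ) and V(z,ẑ) := √(1−z) + √(1−ẑ). Then limsup of U₂(z,ẑ)/V(z,ẑ) as (z,ẑ) → (1,1) with z, ẑ ∈ [−1,1) equals (1/2)·max{−ηM, η̂M̂ − 2√(ηη̂MM̂)} = (1/2)η̂M̂ − √(ηη̂MM̂). Moreover this limsup is strictly negative if and only if η̂M̂ < 4ηM. -/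

import Mathlib

/-!
Write `s = √(1 - z)`, `t = √(1 - ẑ)`, `a = ηM`, `b = η̂M̂`. Then `U₂ = A s + B t` with
`A, B` polynomial in `(z, ẑ)` and `A(1,1) = -a/2 ≤ b/2 - √(ab) = B(1,1)` by AM-GM, so `U₂ / V`
is a weighted mean of `A` and `B`. Hence the limsup is at most `max (A(1,1)) (B(1,1)) = B(1,1)`,
and it is attained along `(z, ẑ) = (1 - q⁴, 1 - q²)`, where `s / t = q → 0` puts all the weight
on `B`.
-/

open Filter Topology

/-- E(z,ẑ) := √(η̂M̂)(√(η̂M̂)·ẑ − √(ηM)·z). -/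
noncomputable def Efun (η η' M M' z z' : ℝ) : ℝ :=
  Real.sqrt (η' * M') * (Real.sqrt (η' * M') * z' - Real.sqrt (η * M) * z)

/-- The control-independent part U₂ of the generator of the Lyapunov function. -/
noncomputable def U2fun (η η' M M' z z' : ℝ) : ℝ :=
  -(1/8) * (η * M * (1 + z) ^ 2 * Real.sqrt (1 - z)
      + η' * M' * (1 + z') ^ 2 * Real.sqrt (1 - z'))
    + (1/2) * (1 + z') * Efun η η' M M' z z' * Real.sqrt (1 - z')

/-- The Lyapunov function V(z,ẑ) = √(1−z) + √(1−ẑ) in the coordinates (z,ẑ). -/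
noncomputable def Vfun (z z' : ℝ) : ℝ := Real.sqrt (1 - z) + Real.sqrt (1 - z')

lemma min_le_mul_add_mul_div_add {a b s t : ℝ} (hs : 0 ≤ s) (ht : 0 ≤ t) (hst : 0 < s + t) :
    min a b ≤ (a * s + b * t) / (s + t) := by
  rw [le_div_iff₀ hst, mul_add]
  gcongr
  exacts [min_le_left a b, min_le_right a b]

lemma mul_add_mul_div_add_le_max {a b s t : ℝ} (hs : 0 ≤ s) (ht : 0 ≤ t) (hst : 0 < s + t) :
    (a * s + b * t) / (s + t) ≤ max a b := by
  rw [div_le_iff₀ hst, mul_add]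
  gcongr
  exacts [le_max_left a b, le_max_right a b]

/-- `l'` witnesses the lower bound: along it the weight `s` becomes negligible against `t`. -/
lemma limsup_mul_add_mul_div_add_eq {α : Type*} {l l' : Filter α} [l'.NeBot] (hl' : l' ≤ l)
    {f g s t : α → ℝ} {a b : ℝ} (hf : Tendsto f l (𝓝 a)) (hg : Tendsto g l (𝓝 b)) (hab : a ≤ b)
    (hs : ∀ᶠ x in l, 0 ≤ s x) (ht : ∀ᶠ x in l, 0 < t x)
    (hst : Tendsto (fun x => s x / t x) l' (𝓝 0)) :
    limsup (fun x => (f x * s x + g x * t x) / (s x + t x)) l = b := by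
  have : l.NeBot := NeBot.mono ‹_› hl'
  set r := fun x => (f x * s x + g x * t x) / (s x + t x)
  have hmin : ∀ᶠ x in l, min (f x) (g x) ≤ r x := by
    filter_upwards [hs, ht] with x hsx htx
    exact min_le_mul_add_mul_div_add hsx htx.le (by linarith)
  have hmax : ∀ᶠ x in l, r x ≤ max (f x) (g x) := by
    filter_upwards [hs, ht] with x hsx htx
    exact mul_add_mul_div_add_le_max hsx htx.le (by linarith)
  have hfg_max : Tendsto (fun x => max (f x) (g x)) l (𝓝 b) := by
    simpa [max_eq_right hab] using hf.max hg
  have hr_above : IsBoundedUnder (· ≤ ·) l r := hfg_max.isBoundedUnder_le.mono_le hmax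
  have hr_below : IsBoundedUnder (· ≥ ·) l r :=
    (hf.min hg).isBoundedUnder_ge.mono_ge hmin
  have hr' : Tendsto r l' (𝓝 b) := by
    have hlim : Tendsto (fun x => (f x * (s x / t x) + g x) / (s x / t x + 1)) l'
        (𝓝 ((a * 0 + b) / (0 + 1))) :=
      (((hf.mono_left hl').mul hst).add (hg.mono_left hl')).div
        (hst.add tendsto_const_nhds) (by norm_num)
    rw [mul_zero, zero_add, zero_add, div_one] at hlim
    refine hlim.congr' ((ht.filter_mono hl').mono fun x htx => ?_)
    simp only [r]
    field_simp
  apply le_antisymm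
  · calc limsup r l ≤ limsup (fun x => max (f x) (g x)) l :=
          limsup_le_limsup hmax hr_below.isCoboundedUnder_le hfg_max.isBoundedUnder_le
      _ = b := hfg_max.limsup_eq
  · calc b = limsup r l' := hr'.limsup_eq.symm
      _ ≤ limsup r l :=
          limsup_le_limsup_of_le hl' hr'.isBoundedUnder_ge.isCoboundedUnder_le hr_above

lemma two_mul_sqrt_mul_le_add {a b : ℝ} (ha : 0 ≤ a) (hb : 0 ≤ b) : 2 * √(a * b) ≤ a + b := by
  have := two_mul_le_add_sq √a √b
  rwa [Real.sq_sqrt ha, Real.sq_sqrt hb, mul_assoc, ← Real.sqrt_mul ha] at this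

lemma half_sub_sqrt_mul_neg_iff {a b : ℝ} (hb : 0 < b) :
    b / 2 - √(a * b) < 0 ↔ b < 4 * a := by
  rw [sub_neg, Real.lt_sqrt (by positivity)]
  constructor <;> intro h <;> nlinarith

noncomputable def U2coeffZ (η M : ℝ) (p : ℝ × ℝ) : ℝ := -(η * M / 8) * (1 + p.1) ^ 2

noncomputable def U2coeffZ' (η η' M M' : ℝ) (p : ℝ × ℝ) : ℝ :=
  -(η' * M' / 8) * (1 + p.2) ^ 2 + (1 / 2) * (1 + p.2) * Efun η η' M M' p.1 p.2

lemma U2fun_eq (η η' M M' z z' : ℝ) :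
    U2fun η η' M M' z z' =
      U2coeffZ η M (z, z') * √(1 - z) + U2coeffZ' η η' M M' (z, z') * √(1 - z') := by
  simp only [U2fun, U2coeffZ, U2coeffZ']
  ring

lemma continuous_U2coeffZ (η M : ℝ) : Continuous (U2coeffZ η M) := by
  unfold U2coeffZ; fun_prop

lemma continuous_U2coeffZ' (η η' M M' : ℝ) : Continuous (U2coeffZ' η η' M M') := by
  unfold U2coeffZ' Efun; fun_prop

lemma U2coeffZ_one_one (η M : ℝ) : U2coeffZ η M (1, 1) = -(η * M) / 2 := by
  norm_num [U2coeffZ]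
  ring

lemma U2coeffZ'_one_one {η η' M M' : ℝ} (hb : 0 ≤ η' * M') :
    U2coeffZ' η η' M M' (1, 1) = η' * M' / 2 - √(η * M * (η' * M')) := by
  rw [Real.sqrt_mul' _ hb]
  have := Real.mul_self_sqrt hb
  simp only [U2coeffZ', Efun]
  linear_combination this

lemma tendsto_one_sub_pow_four_one_sub_sq :
    Tendsto (fun q : ℝ => (1 - q ^ 4, 1 - q ^ 2)) (𝓝[>] 0)
      (𝓝[Set.Ico (-1) 1 ×ˢ Set.Ico (-1) 1] (1, 1)) := by
  refine tendsto_nhdsWithin_iff.2 ⟨?_, ?_⟩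
  · exact ((continuous_const.sub (continuous_pow 4)).prodMk
      (continuous_const.sub (continuous_pow 2))).tendsto' 0 (1, 1) (by norm_num)
      |>.mono_left nhdsWithin_le_nhds
  · filter_upwards [Ioo_mem_nhdsGT (zero_lt_one' ℝ)] with q ⟨hq0, hq1⟩
    have hq2 : q ^ 2 < 1 := by nlinarith
    have hq4 : q ^ 4 < 1 := by nlinarith
    simp only [Set.mem_prod, Set.mem_Ico]
    refine ⟨⟨?_, ?_⟩, ⟨?_, ?_⟩⟩ <;> nlinarith [pow_pos hq0 2, pow_pos hq0 4]

lemma limsup_U2fun_div_Vfun {η η' M M' : ℝ} (ha : 0 ≤ η * M) (hb : 0 ≤ η' * M') :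
    limsup (fun p : ℝ × ℝ => U2fun η η' M M' p.1 p.2 / Vfun p.1 p.2)
        (𝓝[Set.Ico (-1) 1 ×ˢ Set.Ico (-1) 1] (1, 1))
      = η' * M' / 2 - √(η * M * (η' * M')) := by
  have hweights : Tendsto (fun p : ℝ × ℝ => √(1 - p.1) / √(1 - p.2))
      (map (fun q : ℝ => (1 - q ^ 4, 1 - q ^ 2)) (𝓝[>] 0)) (𝓝 0) := by
    refine tendsto_map'_iff.2 (tendsto_nhdsWithin_of_tendsto_nhds tendsto_id |>.congr' ?_)
    filter_upwards [self_mem_nhdsWithin] with q (hq : 0 < q)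
    have h4 : √(q ^ 4) = q ^ 2 := by
      rw [show q ^ 4 = (q ^ 2) ^ 2 by ring, Real.sqrt_sq (by positivity)]
    simp only [Function.comp_apply, sub_sub_cancel, h4, Real.sqrt_sq hq.le, id]
    field_simp
  have hAB : -(η * M) / 2 ≤ η' * M' / 2 - √(η * M * (η' * M')) := by
    linarith [two_mul_sqrt_mul_le_add ha hb]
  simp only [Vfun, U2fun_eq]
  exact limsup_mul_add_mul_div_add_eq tendsto_one_sub_pow_four_one_sub_sq
    (((continuous_U2coeffZ η M).tendsto' _ _ (U2coeffZ_one_one η M)).mono_left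
      nhdsWithin_le_nhds)
    (((continuous_U2coeffZ' η η' M M').tendsto' _ _ (U2coeffZ'_one_one hb)).mono_left
      nhdsWithin_le_nhds)
    hAB (Eventually.of_forall fun _ => Real.sqrt_nonneg _)
    (eventually_nhdsWithin_of_forall fun p hp => Real.sqrt_pos.2 (sub_pos.2 hp.2.2)) hweights

theorem limsup_U2_over_V (η η' M M' : ℝ)
    (hη : η ∈ Set.Ioc (0 : ℝ) 1) (hη' : η' ∈ Set.Ioc (0 : ℝ) 1)
    (hM : 0 < M) (hM' : 0 < M') :
    limsup (fun p : ℝ × ℝ => U2fun η η' M M' p.1 p.2 / Vfun p.1 p.2)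
        (nhdsWithin ((1 : ℝ), (1 : ℝ)) (Set.Ico (-1 : ℝ) 1 ×ˢ Set.Ico (-1 : ℝ) 1))
      = (1/2) * max (-(η * M)) (η' * M' - 2 * Real.sqrt (η * η' * M * M')) ∧
    (1/2) * max (-(η * M)) (η' * M' - 2 * Real.sqrt (η * η' * M * M'))
      = (1/2) * (η' * M') - Real.sqrt (η * η' * M * M') ∧
    (limsup (fun p : ℝ × ℝ => U2fun η η' M M' p.1 p.2 / Vfun p.1 p.2)
        (nhdsWithin ((1 : ℝ), (1 : ℝ)) (Set.Ico (-1 : ℝ) 1 ×ˢ Set.Ico (-1 : ℝ) 1)) < 0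
      ↔ η' * M' < 4 * (η * M)) := by
  have ha : 0 ≤ η * M := (mul_pos hη.1 hM).le
  have hb : 0 < η' * M' := mul_pos hη'.1 hM'
  have hprod : η * η' * M * M' = η * M * (η' * M') := by ring
  have hlim := limsup_U2fun_div_Vfun ha hb.le
  have hmax : (1/2) * max (-(η * M)) (η' * M' - 2 * Real.sqrt (η * η' * M * M'))
      = (1/2) * (η' * M') - Real.sqrt (η * η' * M * M') := by
    rw [hprod, max_eq_right (by linarith [two_mul_sqrt_mul_le_add ha hb.le])]
    ring
  rw [hprod] at hmax ⊢
  refine ⟨by rw [hlim, hmax]; ring, hmax, ?_⟩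
  rw [hlim]
  exact half_sub_sqrt_mul_neg_iff hb
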